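/- For every integer m ≥ 1 and |q|<1: ∑_{j=1}^{∞} (-1)^j ((q;q)_{m+j-1} − (q;q)_j)/(q;q)_j = 1/2 + (q;q)_{m-1}/(-1;q)_m − (q;q)_{m-1}. -/

import Mathlib

/-!
Write `c_n(i) = (q^{i+1};q)_n`, so that the summand is `(-1)^j (c_{m-1}(j) - 1)`. Summation by
parts with the telescoping relation `c_{n+1}(i+1) - c_{n+1}(i) = q^{i+1} (1 - q^{n+1}) c_n(i+1)`
turns `(1 - x) ∑ xⁱ c_{n+1}(i)` into `(1 - q^{n+1}) ∑ (xq)ⁱ c_n(i)`; by induction,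
`∑ xⁱ c_n(i) = (q;q)_n / (x;q)_{n+1}` for `|x| < 1`. At `x = -1` the same summation by parts,
applied to the sequence `c_n(i) - 1 = O(qⁱ)`, expresses the alternating sum through the generating
function of `c_{n-1}` at `x = -q`, and `(-1;q)_{n+1} = 2 (-q;q)_n` gives the closed form.
-/

open Finset

/-- q-Pochhammer symbol (a;q)_n = ∏_{k=0}^{n-1} (1 - a q^k). -/
noncomputable def qP (a q : ℂ) (n : ℕ) : ℂ := ∏ k ∈ Finset.range n, (1 - a * q ^ k)

/-- Gaussian (q-)binomial coefficient [N choose n]_q. -/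
noncomputable def qBinom (q : ℂ) (N n : ℕ) : ℂ := qP q q N / (qP q q n * qP q q (N - n))

theorem HasSum.pow_succ_mul_sub {R : Type*} [Ring R] [TopologicalSpace R] [IsTopologicalRing R]
    {f : ℕ → R} {x S : R} (hf : HasSum (fun i => x ^ i * f i) S) :
    HasSum (fun i => x ^ (i + 1) * (f (i + 1) - f i)) ((1 - x) * S - f 0) := by
  have hshift : HasSum (fun i => x ^ (i + 1) * f (i + 1)) (S - f 0) := by
    simpa using (hasSum_nat_add_iff' 1).2 hf
  rw [sub_mul, one_mul, sub_right_comm]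
  exact (hshift.sub (hf.mul_left x)).congr_fun fun i => by simp only [mul_sub, pow_succ', mul_assoc]

section qPochhammer

variable {a q : ℂ}

@[simp]
theorem qP_zero (a q : ℂ) : qP a q 0 = 1 := prod_range_zero _

theorem qP_succ (a q : ℂ) (n : ℕ) : qP a q (n + 1) = qP a q n * (1 - a * q ^ n) :=
  prod_range_succ _ _

theorem qP_add (a q : ℂ) (m n : ℕ) : qP a q (m + n) = qP a q m * qP (a * q ^ m) q n := by
  simp only [qP, prod_range_add, pow_add, mul_assoc]

theorem qP_succ' (a q : ℂ) (n : ℕ) : qP a q (n + 1) = (1 - a) * qP (a * q) q n := by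
  rw [add_comm, qP_add, pow_one]; simp [qP]

theorem qP_mul_sub_qP (a q : ℂ) (n : ℕ) :
    qP (a * q) q (n + 1) - qP a q (n + 1) = a * (1 - q ^ (n + 1)) * qP (a * q) q n := by
  rw [qP_succ (a * q), qP_succ' a]; ring

theorem qP_pow_succ_sub (q : ℂ) (n i : ℕ) :
    qP (q ^ (i + 2)) q (n + 1) - qP (q ^ (i + 1)) q (n + 1)
      = q ^ (i + 1) * (1 - q ^ (n + 1)) * qP (q ^ (i + 2)) q n := by
  rw [pow_succ q (i + 1), qP_mul_sub_qP]

theorem qP_ne_zero (ha : ‖a‖ < 1) (hq : ‖q‖ ≤ 1) (n : ℕ) : qP a q n ≠ 0 := by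
  refine prod_ne_zero_iff.2 fun k _ h => ?_
  have hlt : ‖a * q ^ k‖ < 1 := by
    rw [norm_mul, norm_pow]
    exact (mul_le_of_le_one_right (norm_nonneg a) (pow_le_one₀ (norm_nonneg q) hq)).trans_lt ha
  simp [← sub_eq_zero.1 h] at hlt

theorem norm_qP_sub_one_le (ha : ‖a‖ ≤ 1) (hq : ‖q‖ ≤ 1) (n : ℕ) :
    ‖qP a q n - 1‖ ≤ (2 ^ n - 1) * ‖a‖ := by
  induction n with
  | zero => simp
  | succ n ih =>
    have hfac : ‖a * q ^ n‖ ≤ ‖a‖ := by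
      rw [norm_mul, norm_pow]
      exact mul_le_of_le_one_right (norm_nonneg a) (pow_le_one₀ (norm_nonneg q) hq)
    have hone : ‖1 - a * q ^ n‖ ≤ 2 := by
      linarith [norm_sub_le (1 : ℂ) (a * q ^ n), norm_one (α := ℂ)]
    calc ‖qP a q (n + 1) - 1‖ = ‖(qP a q n - 1) * (1 - a * q ^ n) - a * q ^ n‖ := by
          rw [qP_succ]; ring_nf
      _ ≤ ‖qP a q n - 1‖ * ‖1 - a * q ^ n‖ + ‖a * q ^ n‖ := by
          rw [← norm_mul]; exact norm_sub_le _ _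
      _ ≤ (2 ^ n - 1) * ‖a‖ * 2 + ‖a‖ := by have := (norm_nonneg _).trans ih; gcongr
      _ = (2 ^ (n + 1) - 1) * ‖a‖ := by ring

theorem norm_qP_le (ha : ‖a‖ ≤ 1) (hq : ‖q‖ ≤ 1) (n : ℕ) : ‖qP a q n‖ ≤ 2 ^ n := by
  have h := norm_qP_sub_one_le ha hq n
  have : (2 ^ n - 1) * ‖a‖ ≤ 2 ^ n - 1 :=
    mul_le_of_le_one_right (by linarith [one_le_pow₀ (M₀ := ℝ) (a := 2) (by norm_num) (n := n)]) ha
  linarith [norm_le_norm_add_norm_sub' (qP a q n) 1, norm_one (α := ℂ)]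

end qPochhammer

section GeneratingFunction

variable {q : ℂ}

theorem summable_pow_mul_qP (hq : ‖q‖ < 1) {x : ℂ} (hx : ‖x‖ < 1) (n : ℕ) :
    Summable fun i => x ^ i * qP (q ^ (i + 1)) q n := by
  refine .of_norm_bounded ((summable_geometric_of_lt_one (norm_nonneg x) hx).mul_left (2 ^ n))
    fun i => ?_
  rw [norm_mul, norm_pow, mul_comm]
  gcongr
  exact norm_qP_le (by rw [norm_pow]; exact pow_le_one₀ (norm_nonneg q) hq.le) hq.le n

theorem hasSum_pow_mul_qP (hq : ‖q‖ < 1) (n : ℕ) {x : ℂ} (hx : ‖x‖ < 1) :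
    HasSum (fun i => x ^ i * qP (q ^ (i + 1)) q n) (qP q q n / qP x q (n + 1)) := by
  induction n generalizing x with
  | zero => simpa [qP_succ] using hasSum_geometric_of_norm_lt_one hx
  | succ n ih =>
    have hxq : ‖x * q‖ < 1 := by
      rw [norm_mul]; exact (mul_le_of_le_one_right (norm_nonneg x) hq.le).trans_lt hx
    obtain ⟨S, hS⟩ := summable_pow_mul_qP hq hx (n + 1)
    have hparts := hS.pow_succ_mul_sub
    have htail : HasSum (fun i => (x * q) ^ (i + 1) * qP (q ^ (i + 2)) q n)
        (qP q q n / qP (x * q) q (n + 1) - qP q q n) := by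
      simpa using (hasSum_nat_add_iff' 1).2 (ih hxq)
    simp_rw [qP_pow_succ_sub] at hparts
    have hrel := hparts.unique ((htail.mul_left (1 - q ^ (n + 1))).congr_fun fun i => by ring)
    have hx1 : 1 - x ≠ 0 := sub_ne_zero.2 fun h => by simp [← h] at hx
    have hQ := qP_ne_zero hxq hq.le (n + 1)
    have hG := div_mul_cancel₀ (qP q q n) hQ
    convert hS using 1
    rw [qP_succ' x, qP_succ q q n, eq_comm, eq_div_iff (mul_ne_zero hx1 hQ)]
    simp only [zero_add, pow_one, qP_succ q q n] at hrel
    linear_combination qP (x * q) q (n + 1) * hrel + (1 - q ^ (n + 1)) * hG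

theorem summable_alternating_qP_sub_one (hq : ‖q‖ < 1) (n : ℕ) :
    Summable fun i => (-1 : ℂ) ^ i * (qP (q ^ (i + 1)) q n - 1) := by
  refine .of_norm_bounded
    ((summable_geometric_of_lt_one (norm_nonneg q) hq).mul_left ((2 ^ n - 1) * ‖q‖)) fun i => ?_
  rw [norm_mul, norm_pow, norm_neg, norm_one, one_pow, one_mul]
  calc ‖qP (q ^ (i + 1)) q n - 1‖ ≤ (2 ^ n - 1) * ‖q ^ (i + 1)‖ :=
        norm_qP_sub_one_le (by rw [norm_pow]; exact pow_le_one₀ (norm_nonneg q) hq.le) hq.le n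
    _ = (2 ^ n - 1) * ‖q‖ * ‖q‖ ^ i := by rw [norm_pow, pow_succ']; ring

theorem hasSum_alternating_qP_sub_one (hq : ‖q‖ < 1) (n : ℕ) :
    HasSum (fun j => (-1 : ℂ) ^ (j + 1) * (qP (q ^ (j + 2)) q n - 1))
      (1 / 2 + qP q q n / qP (-1) q (n + 1) - qP q q n) := by
  cases n with
  | zero => norm_num [qP_succ]
  | succ k =>
    obtain ⟨D, hD⟩ := summable_alternating_qP_sub_one hq (k + 1)
    have hparts := hD.pow_succ_mul_sub
    simp_rw [sub_sub_sub_cancel_right, qP_pow_succ_sub] at hparts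
    have htail : HasSum (fun i => (-q) ^ (i + 1) * qP (q ^ (i + 2)) q k)
        (qP q q k / qP (-q) q (k + 1) - qP q q k) := by
      simpa using (hasSum_nat_add_iff' 1).2 (hasSum_pow_mul_qP hq k (x := -q) (by simpa))
    have hrel := hparts.unique ((htail.mul_left (1 - q ^ (k + 1))).congr_fun fun i => by ring)
    have hT : HasSum (fun j => (-1 : ℂ) ^ (j + 1) * (qP (q ^ (j + 2)) q (k + 1) - 1))
        (D - (qP q q (k + 1) - 1)) := by
      simpa using (hasSum_nat_add_iff' 1).2 hD
    convert hT using 1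
    rw [qP_succ' (-1), neg_one_mul, qP_succ q q k]
    simp only [zero_add, pow_one, qP_succ q q k] at hrel
    linear_combination -hrel / 2

end GeneratingFunction

theorem stmt_12 (m : ℕ) (hm : 1 ≤ m) (q : ℂ) (hq : ‖q‖ < 1) :
    ∑' j : ℕ, (-1 : ℂ) ^ (j + 1) * (qP q q (m + j) - qP q q (j + 1)) / qP q q (j + 1) =
      1 / 2 + qP q q (m - 1) / qP (-1) q m - qP q q (m - 1) := by
  obtain ⟨n, rfl⟩ : ∃ n, m = n + 1 := ⟨m - 1, by omega⟩
  have hterm (j : ℕ) : (-1 : ℂ) ^ (j + 1) * (qP q q (n + 1 + j) - qP q q (j + 1)) / qP q q (j + 1)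
      = (-1) ^ (j + 1) * (qP (q ^ (j + 2)) q n - 1) := by
    have hP := qP_ne_zero hq hq.le (j + 1)
    rw [show n + 1 + j = j + 1 + n by ring, qP_add, ← pow_succ']
    field_simp
  rw [tsum_congr hterm, (hasSum_alternating_qP_sub_one hq n).tsum_eq, Nat.add_sub_cancel]
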